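/- arXiv:1908.10447 — 2 statements merged into one kernel-verified Lean document; each statement's English description precedes it below -/
import Mathlib

section
/- Let φ = (φ_tot, φ_st) : a → b be an interconnection morphism of surjective submersions, i.e., a morphism with φ_st : a_st → b_st a diffeomorphism. Then the pullback φ* : Crl(b) → Crl(a) defined by φ*F := (Tφ_st)⁻¹ ∘ F ∘ φ_tot is a well-defined linear map, and for every F ∈ Crl(b), the pair (φ*F, F) belongs to Crl(φ). -/
open Manifold

theorem Diffeomorph.mfderiv_apply_mfderiv_symm_apply
    {𝕜 : Type*} [NontriviallyNormedField 𝕜]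
    {E : Type*} [NormedAddCommGroup E] [NormedSpace 𝕜 E]
    {H : Type*} [TopologicalSpace H] {I : ModelWithCorners 𝕜 E H}
    {M : Type*} [TopologicalSpace M] [ChartedSpace H M]
    {E' : Type*} [NormedAddCommGroup E'] [NormedSpace 𝕜 E']
    {H' : Type*} [TopologicalSpace H'] {J : ModelWithCorners 𝕜 E' H'}
    {N : Type*} [TopologicalSpace N] [ChartedSpace H' N]
    {n : WithTop ℕ∞} (Φ : M ≃ₘ^n⟮I, J⟯ N) (hn : n ≠ 0) (x : M) (v : TangentSpace J (Φ x)) :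
    mfderiv I J Φ x (mfderiv J I Φ.symm (Φ x) v) = v := by
  have hchain := mfderiv_comp_apply_of_eq (Φ x) (Φ.mdifferentiable hn x)
    (Φ.symm.mdifferentiable hn (Φ x)) (Φ.symm_apply_apply x) v
  rw [show (Φ : M → N) ∘ Φ.symm = id from funext Φ.apply_symm_apply, mfderiv_id] at hchain
  exact hchain.symm

theorem interconnection_pullback_linear_general
    {Atot : Type*}
    {E₂ : Type*} [NormedAddCommGroup E₂] [NormedSpace ℝ E₂]
    {H₂ : Type*} [TopologicalSpace H₂] (I₂ : ModelWithCorners ℝ E₂ H₂)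
    {Ast : Type*} [TopologicalSpace Ast] [ChartedSpace H₂ Ast]
    {Btot : Type*}
    {E₄ : Type*} [NormedAddCommGroup E₄] [NormedSpace ℝ E₄]
    {H₄ : Type*} [TopologicalSpace H₄] (I₄ : ModelWithCorners ℝ E₄ H₄)
    {Bst : Type*} [TopologicalSpace Bst] [ChartedSpace H₄ Bst]
    (pa : Atot → Ast) (pb : Btot → Bst) (φtot : Atot → Btot)
    (φst : Diffeomorph I₂ I₄ Ast Bst (⊤ : ℕ∞))
    (hcomm : ∀ q : Atot, φst (pa q) = pb (φtot q)) :
    ∃ L : (∀ r : Btot, TangentSpace I₄ (pb r)) →ₗ[ℝ]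
        (∀ q : Atot, TangentSpace I₂ (pa q)),
      (∀ (F : ∀ r : Btot, TangentSpace I₄ (pb r)) (q : Atot),
        L F q = mfderiv I₄ I₂ (φst.symm) (pb (φtot q)) (F (φtot q))) ∧
      (∀ (F : ∀ r : Btot, TangentSpace I₄ (pb r)) (q : Atot),
        mfderiv I₂ I₄ (φst) (pa q) (L F q) = F (φtot q)) := by
  refine ⟨LinearMap.pi fun q ↦
      (mfderiv I₄ I₂ φst.symm (pb (φtot q))).toLinearMap ∘ₗ LinearMap.proj (φtot q),
    fun F q ↦ rfl, fun F q ↦ ?_⟩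
  show mfderiv I₂ I₄ φst (pa q) (mfderiv I₄ I₂ φst.symm (pb (φtot q)) (F (φtot q))) = F (φtot q)
  rw [← hcomm q]
  exact φst.mfderiv_apply_mfderiv_symm_apply (by simp) (pa q) (F (φtot q))

/-- For an interconnection morphism `φ = (φ_tot, φ_st) : a → b` of surjective
submersions (`φ_st` a diffeomorphism), the pullback
`φ*F = (Tφ_st)⁻¹ ∘ F ∘ φ_tot` is a well-defined linear map `Crl(b) → Crl(a)`,
and `(φ*F, F) ∈ Crl(φ)` for every `F ∈ Crl(b)`. -/
theorem interconnection_pullback_linear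
    {E₁ : Type*} [NormedAddCommGroup E₁] [NormedSpace ℝ E₁]
    {H₁ : Type*} [TopologicalSpace H₁] (I₁ : ModelWithCorners ℝ E₁ H₁)
    {Atot : Type*} [TopologicalSpace Atot] [ChartedSpace H₁ Atot]
    {E₂ : Type*} [NormedAddCommGroup E₂] [NormedSpace ℝ E₂]
    {H₂ : Type*} [TopologicalSpace H₂] (I₂ : ModelWithCorners ℝ E₂ H₂)
    {Ast : Type*} [TopologicalSpace Ast] [ChartedSpace H₂ Ast]
    [IsManifold I₂ (⊤ : ℕ∞) Ast]
    {E₃ : Type*} [NormedAddCommGroup E₃] [NormedSpace ℝ E₃]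
    {H₃ : Type*} [TopologicalSpace H₃] (I₃ : ModelWithCorners ℝ E₃ H₃)
    {Btot : Type*} [TopologicalSpace Btot] [ChartedSpace H₃ Btot]
    {E₄ : Type*} [NormedAddCommGroup E₄] [NormedSpace ℝ E₄]
    {H₄ : Type*} [TopologicalSpace H₄] (I₄ : ModelWithCorners ℝ E₄ H₄)
    {Bst : Type*} [TopologicalSpace Bst] [ChartedSpace H₄ Bst]
    [IsManifold I₄ (⊤ : ℕ∞) Bst]
    (pa : Atot → Ast) (hpa : ContMDiff I₁ I₂ (⊤ : ℕ∞) pa) (hpas : Function.Surjective pa)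
    (hpasub : ∀ q, Function.Surjective (mfderiv I₁ I₂ pa q))
    (pb : Btot → Bst) (hpb : ContMDiff I₃ I₄ (⊤ : ℕ∞) pb) (hpbs : Function.Surjective pb)
    (hpbsub : ∀ q, Function.Surjective (mfderiv I₃ I₄ pb q))
    (φtot : Atot → Btot) (hφtot : ContMDiff I₁ I₃ (⊤ : ℕ∞) φtot)
    (φst : Diffeomorph I₂ I₄ Ast Bst (⊤ : ℕ∞))
    (hcomm : ∀ q : Atot, φst (pa q) = pb (φtot q)) :
    ∃ L : (∀ r : Btot, TangentSpace I₄ (pb r)) →ₗ[ℝ]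
        (∀ q : Atot, TangentSpace I₂ (pa q)),
      (∀ (F : ∀ r : Btot, TangentSpace I₄ (pb r)) (q : Atot),
        L F q = mfderiv I₄ I₂ (φst.symm) (pb (φtot q)) (F (φtot q))) ∧
      (∀ (F : ∀ r : Btot, TangentSpace I₄ (pb r)) (q : Atot),
        mfderiv I₂ I₄ (φst) (pa q) (L F q) = F (φtot q)) :=
  interconnection_pullback_linear_general I₂ I₄ pa pb φtot φst hcomm
end

section
/- Suppose f : a → c, g : b → d are maps of surjective submersions and φ : a → b, ψ : c → d are interconnection morphisms with f ∘ φ⁻¹-square commuting, i.e., ψ ∘ f = g ∘ φ as maps of submersions composed appropriately (the square with horizontal arrows f : a → c, g : b → d and vertical arrows φ : a → b, ψ : c → d commutes). If open systems F ∈ Crl(b) and G ∈ Crl(d) are g-related (i.e., (F,G) ∈ Crl(g)), then φ*F and ψ*G are f-related, i.e., (φ*F, ψ*G) ∈ Crl(f). -/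
/-! Inverting the diffeomorphisms turns the state-level square `ψ ∘ f = g ∘ φ` into
`f ∘ φ⁻¹ = ψ⁻¹ ∘ g`, and the claim is the chain rule for this identity applied to `F`;
the total-space square only moves the base points of `F` and `G` into place. -/

open Manifold

section

variable {𝕜 : Type*} [NontriviallyNormedField 𝕜]
  {E : Type*} [NormedAddCommGroup E] [NormedSpace 𝕜 E]
  {H : Type*} [TopologicalSpace H] {I : ModelWithCorners 𝕜 E H}
  {M : Type*} [TopologicalSpace M] [ChartedSpace H M]
  {E' : Type*} [NormedAddCommGroup E'] [NormedSpace 𝕜 E']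
  {H' : Type*} [TopologicalSpace H'] {I' : ModelWithCorners 𝕜 E' H'}
  {M' : Type*} [TopologicalSpace M'] [ChartedSpace H' M']
  {F : Type*} [NormedAddCommGroup F] [NormedSpace 𝕜 F]
  {G : Type*} [TopologicalSpace G] {J : ModelWithCorners 𝕜 F G}
  {N : Type*} [TopologicalSpace N] [ChartedSpace G N]
  {F' : Type*} [NormedAddCommGroup F'] [NormedSpace 𝕜 F']
  {G' : Type*} [TopologicalSpace G'] {J' : ModelWithCorners 𝕜 F' G'}
  {N' : Type*} [TopologicalSpace N'] [ChartedSpace G' N']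

theorem mfderiv_comp_eq_of_comp_eq {u : M → M'} {v : M' → N'} {u' : M → N} {v' : N → N'}
    {x : M} (hsq : v ∘ u = v' ∘ u')
    (hv : MDifferentiableAt I' J' v (u x)) (hu : MDifferentiableAt I I' u x)
    (hv' : MDifferentiableAt J J' v' (u' x)) (hu' : MDifferentiableAt I J u' x) :
    (mfderiv I' J' v (u x)).comp (mfderiv I I' u x)
      = (mfderiv J J' v' (u' x)).comp (mfderiv I J u' x) := by
  rw [← mfderiv_comp x hv hu, ← mfderiv_comp x hv' hu', hsq]

variable {n : WithTop ℕ∞}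

theorem Diffeomorph.comp_symm_eq_symm_comp (φ : M ≃ₘ^n⟮I, J⟯ N) (ψ : M' ≃ₘ^n⟮I', J'⟯ N')
    {f : M → M'} {g : N → N'} (hsq : ∀ x, ψ (f x) = g (φ x)) :
    f ∘ φ.symm = ψ.symm ∘ g := by
  funext y
  exact ψ.toEquiv.eq_symm_apply.2 (by simpa using hsq (φ.symm y))

theorem Diffeomorph.mfderiv_comp_mfderiv_symm_eq_of_comm (φ : M ≃ₘ^n⟮I, J⟯ N) (ψ : M' ≃ₘ^n⟮I', J'⟯ N')
    (hn : n ≠ 0) {f : M → M'} {g : N → N'} (hsq : ∀ x, ψ (f x) = g (φ x)) {y : N}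
    (hf : MDifferentiableAt I I' f (φ.symm y)) (hg : MDifferentiableAt J J' g y)
    (v : TangentSpace J y) :
    mfderiv I I' f (φ.symm y) (mfderiv J I φ.symm y v)
      = mfderiv J' I' ψ.symm (g y) (mfderiv J J' g y v) :=
  DFunLike.congr_fun (mfderiv_comp_eq_of_comp_eq (u := φ.symm) (u' := g)
    (φ.comp_symm_eq_symm_comp ψ hsq) hf (φ.symm.mdifferentiable hn y)
    (ψ.symm.mdifferentiable hn (g y)) hg) v

end

theorem pullback_preserves_relatedness_general
    {Atot : Type*}
    {E₂ : Type*} [NormedAddCommGroup E₂] [NormedSpace ℝ E₂]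
    {H₂ : Type*} [TopologicalSpace H₂] (I₂ : ModelWithCorners ℝ E₂ H₂)
    {Ast : Type*} [TopologicalSpace Ast] [ChartedSpace H₂ Ast]
    {Btot : Type*}
    {E₄ : Type*} [NormedAddCommGroup E₄] [NormedSpace ℝ E₄]
    {H₄ : Type*} [TopologicalSpace H₄] (I₄ : ModelWithCorners ℝ E₄ H₄)
    {Bst : Type*} [TopologicalSpace Bst] [ChartedSpace H₄ Bst]
    {Ctot : Type*}
    {E₆ : Type*} [NormedAddCommGroup E₆] [NormedSpace ℝ E₆]
    {H₆ : Type*} [TopologicalSpace H₆] (I₆ : ModelWithCorners ℝ E₆ H₆)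
    {Cst : Type*} [TopologicalSpace Cst] [ChartedSpace H₆ Cst]
    {Dtot : Type*}
    {E₈ : Type*} [NormedAddCommGroup E₈] [NormedSpace ℝ E₈]
    {H₈ : Type*} [TopologicalSpace H₈] (I₈ : ModelWithCorners ℝ E₈ H₈)
    {Dst : Type*} [TopologicalSpace Dst] [ChartedSpace H₈ Dst]
    -- the four surjective submersions
    (pa : Atot → Ast)
    (pb : Btot → Bst)
    (pd : Dtot → Dst)
    -- the horizontal map `f : a → c`
    (ftot : Atot → Ctot) (fst : Ast → Cst)
    (hfst : ContMDiff I₂ I₆ (⊤ : ℕ∞) fst)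
    -- the horizontal map `g : b → d`
    (gtot : Btot → Dtot) (gst : Bst → Dst)
    (hgst : ContMDiff I₄ I₈ (⊤ : ℕ∞) gst)
    (hgcomm : ∀ r : Btot, gst (pb r) = pd (gtot r))
    -- the vertical interconnection morphism `φ : a → b`
    (φtot : Atot → Btot)
    (φst : Diffeomorph I₂ I₄ Ast Bst (⊤ : ℕ∞))
    (hφcomm : ∀ q : Atot, φst (pa q) = pb (φtot q))
    -- the vertical interconnection morphism `ψ : c → d`
    (ψtot : Ctot → Dtot)
    (ψst : Diffeomorph I₆ I₈ Cst Dst (⊤ : ℕ∞))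
    -- the square commutes: `ψ ∘ f = g ∘ φ`
    (hsqtot : ∀ q : Atot, ψtot (ftot q) = gtot (φtot q))
    (hsqst : ∀ x : Ast, ψst (fst x) = gst (φst x))
    -- `g`-related open systems `F ∈ Crl(b)`, `G ∈ Crl(d)`
    (F : ∀ r : Btot, TangentSpace I₄ (pb r))
    (G : ∀ s : Dtot, TangentSpace I₈ (pd s))
    (hFG : ∀ r : Btot, mfderiv I₄ I₈ gst (pb r) (F r) = G (gtot r)) :
    -- `φ*F` and `ψ*G` are `f`-related
    ∀ q : Atot,
      mfderiv I₂ I₆ fst (pa q)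
        (mfderiv I₄ I₂ (φst.symm) (pb (φtot q)) (F (φtot q)))
      = mfderiv I₈ I₆ (ψst.symm) (pd (ψtot (ftot q))) (G (ψtot (ftot q))) := by
  intro q
  have hbase : pa q = φst.symm (pb (φtot q)) := by rw [← hφcomm, φst.symm_apply_apply]
  rw [hsqtot, ← hFG, ← hgcomm, hbase]
  exact φst.mfderiv_comp_mfderiv_symm_eq_of_comm ψst (by simp) hsqst (hfst.mdifferentiable (by simp) _)
    (hgst.mdifferentiable (by simp) _) (F (φtot q))

/-- Pullbacks by interconnection maps preserve relatedness of open systems: if the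
square with horizontal maps `f : a → c`, `g : b → d` and vertical interconnection
morphisms `φ : a → b`, `ψ : c → d` commutes (`ψ ∘ f = g ∘ φ`), and open systems
`F ∈ Crl(b)`, `G ∈ Crl(d)` are `g`-related, then `φ*F` and `ψ*G` are `f`-related. -/
theorem pullback_preserves_relatedness
    {E₁ : Type*} [NormedAddCommGroup E₁] [NormedSpace ℝ E₁]
    {H₁ : Type*} [TopologicalSpace H₁] (I₁ : ModelWithCorners ℝ E₁ H₁)
    {Atot : Type*} [TopologicalSpace Atot] [ChartedSpace H₁ Atot]
    {E₂ : Type*} [NormedAddCommGroup E₂] [NormedSpace ℝ E₂]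
    {H₂ : Type*} [TopologicalSpace H₂] (I₂ : ModelWithCorners ℝ E₂ H₂)
    {Ast : Type*} [TopologicalSpace Ast] [ChartedSpace H₂ Ast]
    [IsManifold I₂ (⊤ : ℕ∞) Ast]
    {E₃ : Type*} [NormedAddCommGroup E₃] [NormedSpace ℝ E₃]
    {H₃ : Type*} [TopologicalSpace H₃] (I₃ : ModelWithCorners ℝ E₃ H₃)
    {Btot : Type*} [TopologicalSpace Btot] [ChartedSpace H₃ Btot]
    {E₄ : Type*} [NormedAddCommGroup E₄] [NormedSpace ℝ E₄]
    {H₄ : Type*} [TopologicalSpace H₄] (I₄ : ModelWithCorners ℝ E₄ H₄)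
    {Bst : Type*} [TopologicalSpace Bst] [ChartedSpace H₄ Bst]
    [IsManifold I₄ (⊤ : ℕ∞) Bst]
    {E₅ : Type*} [NormedAddCommGroup E₅] [NormedSpace ℝ E₅]
    {H₅ : Type*} [TopologicalSpace H₅] (I₅ : ModelWithCorners ℝ E₅ H₅)
    {Ctot : Type*} [TopologicalSpace Ctot] [ChartedSpace H₅ Ctot]
    {E₆ : Type*} [NormedAddCommGroup E₆] [NormedSpace ℝ E₆]
    {H₆ : Type*} [TopologicalSpace H₆] (I₆ : ModelWithCorners ℝ E₆ H₆)
    {Cst : Type*} [TopologicalSpace Cst] [ChartedSpace H₆ Cst]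
    [IsManifold I₆ (⊤ : ℕ∞) Cst]
    {E₇ : Type*} [NormedAddCommGroup E₇] [NormedSpace ℝ E₇]
    {H₇ : Type*} [TopologicalSpace H₇] (I₇ : ModelWithCorners ℝ E₇ H₇)
    {Dtot : Type*} [TopologicalSpace Dtot] [ChartedSpace H₇ Dtot]
    {E₈ : Type*} [NormedAddCommGroup E₈] [NormedSpace ℝ E₈]
    {H₈ : Type*} [TopologicalSpace H₈] (I₈ : ModelWithCorners ℝ E₈ H₈)
    {Dst : Type*} [TopologicalSpace Dst] [ChartedSpace H₈ Dst]
    [IsManifold I₈ (⊤ : ℕ∞) Dst]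
    -- the four surjective submersions
    (pa : Atot → Ast) (hpa : ContMDiff I₁ I₂ (⊤ : ℕ∞) pa) (hpas : Function.Surjective pa)
    (hpasub : ∀ q, Function.Surjective (mfderiv I₁ I₂ pa q))
    (pb : Btot → Bst) (hpb : ContMDiff I₃ I₄ (⊤ : ℕ∞) pb) (hpbs : Function.Surjective pb)
    (hpbsub : ∀ q, Function.Surjective (mfderiv I₃ I₄ pb q))
    (pc : Ctot → Cst) (hpc : ContMDiff I₅ I₆ (⊤ : ℕ∞) pc) (hpcs : Function.Surjective pc)
    (hpcsub : ∀ q, Function.Surjective (mfderiv I₅ I₆ pc q))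
    (pd : Dtot → Dst) (hpd : ContMDiff I₇ I₈ (⊤ : ℕ∞) pd) (hpds : Function.Surjective pd)
    (hpdsub : ∀ q, Function.Surjective (mfderiv I₇ I₈ pd q))
    -- the horizontal map `f : a → c`
    (ftot : Atot → Ctot) (fst : Ast → Cst)
    (hftot : ContMDiff I₁ I₅ (⊤ : ℕ∞) ftot) (hfst : ContMDiff I₂ I₆ (⊤ : ℕ∞) fst)
    (hfcomm : ∀ q : Atot, fst (pa q) = pc (ftot q))
    -- the horizontal map `g : b → d`
    (gtot : Btot → Dtot) (gst : Bst → Dst)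
    (hgtot : ContMDiff I₃ I₇ (⊤ : ℕ∞) gtot) (hgst : ContMDiff I₄ I₈ (⊤ : ℕ∞) gst)
    (hgcomm : ∀ r : Btot, gst (pb r) = pd (gtot r))
    -- the vertical interconnection morphism `φ : a → b`
    (φtot : Atot → Btot) (hφtot : ContMDiff I₁ I₃ (⊤ : ℕ∞) φtot)
    (φst : Diffeomorph I₂ I₄ Ast Bst (⊤ : ℕ∞))
    (hφcomm : ∀ q : Atot, φst (pa q) = pb (φtot q))
    -- the vertical interconnection morphism `ψ : c → d`
    (ψtot : Ctot → Dtot) (hψtot : ContMDiff I₅ I₇ (⊤ : ℕ∞) ψtot)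
    (ψst : Diffeomorph I₆ I₈ Cst Dst (⊤ : ℕ∞))
    (hψcomm : ∀ r : Ctot, ψst (pc r) = pd (ψtot r))
    -- the square commutes: `ψ ∘ f = g ∘ φ`
    (hsqtot : ∀ q : Atot, ψtot (ftot q) = gtot (φtot q))
    (hsqst : ∀ x : Ast, ψst (fst x) = gst (φst x))
    -- `g`-related open systems `F ∈ Crl(b)`, `G ∈ Crl(d)`
    (F : ∀ r : Btot, TangentSpace I₄ (pb r))
    (G : ∀ s : Dtot, TangentSpace I₈ (pd s))
    (hFG : ∀ r : Btot, mfderiv I₄ I₈ gst (pb r) (F r) = G (gtot r)) :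
    -- `φ*F` and `ψ*G` are `f`-related
    ∀ q : Atot,
      mfderiv I₂ I₆ fst (pa q)
        (mfderiv I₄ I₂ (φst.symm) (pb (φtot q)) (F (φtot q)))
      = mfderiv I₈ I₆ (ψst.symm) (pd (ψtot (ftot q))) (G (ψtot (ftot q))) :=
  pullback_preserves_relatedness_general I₂ I₄ I₆ I₈ pa pb pd ftot fst hfst gtot gst hgst hgcomm
    φtot φst hφcomm ψtot ψst hsqtot hsqst F G hFG
end
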